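/- arXiv:2009.04853 — 2 statements merged into one kernel-verified Lean document; each statement's English description precedes it below -/
import Mathlib

section
/- For a positive integer m, any odd integer p \ge 3 and any integer k: (p+1) m^p S_p^{(k)}(1,m) = \sum_{i=0}^{p+1} \binom{p+1}{i} B_i m^{p+1-i} B_{p+1-i}^{(k)}(1) + (1/(p+2)) \sum_{i=0}^{p+1} \binom{p+2}{i} (i-1) B_i m^{p+1-i} (B_{p+2-i}^{(k)}(1) - B_{p+2-i}^{(k)}). -/
noncomputable section

/-- Signed Stirling numbers of the first kind. -/
def stirling1 : ℕ → ℕ → ℤ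
  | 0, 0 => 1
  | 0, _ + 1 => 0
  | _ + 1, 0 => 0
  | n + 1, m + 1 => stirling1 n m - n * stirling1 n (m + 1)

/-- `n!`-normalized coefficients of `Ei_k (log (1+t))`. -/
def polyExpCoeff (k : ℤ) (n : ℕ) : ℚ :=
  ∑ m ∈ Finset.Icc 1 n, (stirling1 n m : ℚ) / (m : ℚ) ^ (k - 1)

/-- Type 2 poly-Bernoulli numbers of index `k`, defined by the recursion coming from the
generating function `Ei_k (log (1+t)) / (e^t - 1) = ∑ B_n^{(k)} t^n/n!`. -/
def polyBernoulli (k : ℤ) : ℕ → ℚ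
  | n =>
    (polyExpCoeff k (n + 1) -
      ∑ l ∈ (Finset.range n).attach, ((n + 1).choose l.1 : ℚ) * polyBernoulli k l.1) / (n + 1)
  termination_by n => n
  decreasing_by exact Finset.mem_range.mp l.2

/-- Type 2 poly-Bernoulli polynomials of index `k`, as functions on `ℝ`. -/
def polyBernoulliPoly (k : ℤ) (n : ℕ) (x : ℝ) : ℝ :=
  ∑ l ∈ Finset.range (n + 1), (n.choose l : ℝ) * (polyBernoulli k l : ℝ) * x ^ (n - l)

/-- Bernoulli polynomials as functions on `ℝ`. -/
def bernoulliPolyFun (n : ℕ) (x : ℝ) : ℝ :=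
  ∑ l ∈ Finset.range (n + 1), (n.choose l : ℝ) * (bernoulli l : ℝ) * x ^ (n - l)

/-- Bernoulli functions `B̄_n(x) = B_n(⟨x⟩)`. -/
def bernoulliBar (n : ℕ) (x : ℝ) : ℝ := bernoulliPolyFun n (Int.fract x)

/-- Type 2 poly-Bernoulli functions `B̄_n^{(k)}(x) = B_n^{(k)}(⟨x⟩)`. -/
def polyBernoulliBar (k : ℤ) (n : ℕ) (x : ℝ) : ℝ := polyBernoulliPoly k n (Int.fract x)

/-- Poly-Dedekind sums `S_p^{(k)}(h,m)`. -/
def polyDedekindSum (k : ℤ) (p h m : ℕ) : ℝ :=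
  ∑ μ ∈ Finset.Ico 1 m, (μ / m : ℝ) * polyBernoulliBar k p (h * μ / m)

/-- Apostol's generalized Dedekind sums `S_p(h,m)`. -/
def genDedekindSum (p h m : ℕ) : ℝ :=
  ∑ μ ∈ Finset.Ico 1 m, (μ / m : ℝ) * bernoulliBar p (h * μ / m)

/-- The polyexponential function `Ei_k`. -/
def polyExp (k : ℤ) (x : ℝ) : ℝ :=
  ∑' n : ℕ, x ^ (n + 1) / ((n + 1 : ℝ) ^ k * (Nat.factorial n : ℝ))

/-- The sawtooth function `((x))`. -/
def sawtooth (x : ℝ) : ℝ := if Int.fract x = 0 then 0 else Int.fract x - 1 / 2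

end

/-! On `[0, 1)` the poly-Bernoulli function is the polynomial `B_p^{(k)}(x)`, so `S_p^{(k)}(1,m)`
is a combination of the power sums `∑_{μ<m} μ^q`, which Faulhaber's formula expresses through
Bernoulli numbers. Both sides thereby become double sums of `B_i B_l^{(k)} m^{p+1-i}`, whose
coefficients agree by the binomial identity
`(p+1) C(p,l) C(p+2-l,i) / (p+2-l) = C(p+1,i) C(p+1-i,l) + (i-1)/(p+2) C(p+2,i) C(p+2-i,l)`. -/

open Finset

theorem Nat.choose_mul_choose_sub_comm (n i l : ℕ) :
    n.choose i * (n - i).choose l = n.choose l * (n - l).choose i := by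
  have hi := Nat.choose_mul (n := n) (Nat.le_add_right i l)
  have hl := Nat.choose_mul (n := n) (Nat.le_add_left l i)
  simp only [Nat.add_sub_cancel_left, Nat.add_sub_cancel] at hi hl
  rw [← hi, ← hl, Nat.choose_symm_add]

theorem Finset.sum_range_sum_range_sub_comm {M : Type*} [AddCommMonoid M] (n : ℕ)
    (f : ℕ → ℕ → M) :
    ∑ a ∈ range n, ∑ b ∈ range (n - a), f a b =
      ∑ b ∈ range n, ∑ a ∈ range (n - b), f a b := by
  rw [← sum_range_diag_flip, ← sum_range_diag_flip n (fun b a => f a b)]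
  refine sum_congr rfl fun j _ => ?_
  rw [← sum_range_reflect]
  refine sum_congr rfl fun i hi => ?_
  have := mem_range.mp hi
  congr 1; omega

theorem succ_mul_choose_mul_choose_div_eq {K : Type*} [Field K] [CharZero K] {p l i : ℕ}
    (h : l + i ≤ p + 1) :
    ((p : K) + 1) * (p.choose l : K) * ((p + 2 - l).choose i : K) / ((p + 2 - l : ℕ) : K) =
      ((p + 1).choose i : K) * ((p + 1 - i).choose l : K) +
        ((i : K) - 1) / ((p : K) + 2) * ((p + 2).choose i : K) * ((p + 2 - i).choose l : K) := by
  obtain ⟨M, hM⟩ : ∃ M, p + 1 - l = i + M := ⟨p + 1 - l - i, by omega⟩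
  have hl : p + 2 - l = i + M + 1 := by omega
  have swap₁ : ((p + 1).choose i : K) * ((p + 1 - i).choose l : K) =
      ((p + 1).choose l : K) * ((i + M).choose i : K) := by
    rw [← hM]; exact_mod_cast Nat.choose_mul_choose_sub_comm (p + 1) i l
  have swap₂ : ((p + 2).choose i : K) * ((p + 2 - i).choose l : K) =
      ((p + 2).choose l : K) * ((i + M + 1).choose i : K) := by
    rw [← hl]; exact_mod_cast Nat.choose_mul_choose_sub_comm (p + 2) i l
  have succ₀ : (p.choose l : K) * ((p : K) + 1) = (p + 1).choose l * ((i : K) + M) := by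
    have := Nat.choose_mul_succ_eq p l
    rw [hM] at this; exact_mod_cast this
  have succ₁ : ((p + 1).choose l : K) * ((p : K) + 2) =
      (p + 2).choose l * ((i : K) + M + 1) := by
    have := Nat.choose_mul_succ_eq (p + 1) l
    rw [show p + 1 + 1 - l = i + M + 1 by omega] at this; exact_mod_cast this
  have succ₂ : ((i + M).choose i : K) * ((i : K) + M + 1) =
      (i + M + 1).choose i * ((M : K) + 1) := by
    have := Nat.choose_mul_succ_eq (i + M) i
    rw [show i + M + 1 - i = M + 1 by omega] at this; exact_mod_cast this
  have hp2 : (p : K) + 2 ≠ 0 := by exact_mod_cast Nat.succ_ne_zero (p + 1)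
  have hiM : (i : K) + M + 1 ≠ 0 := by exact_mod_cast Nat.succ_ne_zero (i + M)
  rw [mul_assoc _ ((p + 2).choose i : K), swap₁, swap₂, hl]
  push_cast
  field_simp
  -- both sides reduce to `C(p+1,l) C(i+M+1,i) (i+M) (p+2)`
  linear_combination ((i + M + 1).choose i : K) * ((p : K) + 2) * succ₀ +
    ((i : K) - 1) * ((i + M + 1).choose i : K) * succ₁ -
    ((p + 1).choose l : K) * ((p : K) + 2) * succ₂

theorem pow_mul_sum_range_div_pow {m : ℕ} (hm : m ≠ 0) {n q : ℕ} (hq : q ≤ n + 1) :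
    (m : ℝ) ^ n * ∑ μ ∈ range m, ((μ : ℝ) / m) ^ q =
      ∑ i ∈ range (q + 1),
        ((q + 1).choose i : ℝ) / (q + 1) * bernoulli i * (m : ℝ) ^ (n + 1 - i) := by
  have hm' : (m : ℝ) ≠ 0 := Nat.cast_ne_zero.mpr hm
  have faulhaber : ∑ μ ∈ range m, (μ : ℝ) ^ q =
      ∑ i ∈ range (q + 1),
        (bernoulli i : ℝ) * ((q + 1).choose i) * (m : ℝ) ^ (q + 1 - i) / (q + 1) := by
    exact_mod_cast sum_range_pow m q
  simp only [div_pow]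
  rw [← sum_div, faulhaber, sum_div, mul_sum]
  refine sum_congr rfl fun i hi => ?_
  have hexp : (m : ℝ) ^ n * (m : ℝ) ^ (q + 1 - i) =
      (m : ℝ) ^ (n + 1 - i) * (m : ℝ) ^ q := by
    rw [← pow_add, ← pow_add]
    congr 1
    have := mem_range.mp hi
    omega
  field_simp
  linear_combination (bernoulli i : ℝ) * ((q + 1).choose i : ℝ) * hexp

theorem polyDedekindSum_one_eq_sum_range {m : ℕ} (hm : 0 < m) (k : ℤ) (p : ℕ) :
    polyDedekindSum k p 1 m =
      ∑ μ ∈ range m, ((μ : ℝ) / m) * polyBernoulliPoly k p (μ / m) := by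
  rw [polyDedekindSum, range_eq_Ico, sum_eq_sum_Ico_succ_bot hm, Nat.cast_zero, zero_div, zero_mul,
    zero_add]
  refine sum_congr rfl fun μ hμ => ?_
  have hμm : (μ : ℝ) < m := by exact_mod_cast (mem_Ico.mp hμ).2
  rw [polyBernoulliBar, Nat.cast_one, one_mul,
    Int.fract_eq_self.mpr ⟨by positivity, (div_lt_one (by positivity)).mpr hμm⟩]

theorem mul_polyBernoulliPoly (k : ℤ) (p : ℕ) (x : ℝ) :
    x * polyBernoulliPoly k p x =
      ∑ l ∈ range (p + 1), (p.choose l : ℝ) * polyBernoulli k l * x ^ (p + 1 - l) := by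
  rw [polyBernoulliPoly, mul_sum]
  refine sum_congr rfl fun l hl => ?_
  rw [show p + 1 - l = p - l + 1 by have := mem_range.mp hl; omega, pow_succ]
  ring

theorem polyBernoulliPoly_one (k : ℤ) (n : ℕ) :
    polyBernoulliPoly k n 1 = ∑ l ∈ range (n + 1), (n.choose l : ℝ) * polyBernoulli k l := by
  simp only [polyBernoulliPoly, one_pow, mul_one]

theorem polyBernoulliPoly_one_sub_polyBernoulli (k : ℤ) (n : ℕ) :
    polyBernoulliPoly k n 1 - polyBernoulli k n =
      ∑ l ∈ range n, (n.choose l : ℝ) * polyBernoulli k l := by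
  rw [polyBernoulliPoly_one, sum_range_succ, Nat.choose_self, Nat.cast_one, one_mul,
    add_sub_cancel_right]

theorem add_one_mul_pow_mul_polyDedekindSum_one {m : ℕ} (hm : 0 < m) (k : ℤ) (p : ℕ) :
    ((p : ℝ) + 1) * (m : ℝ) ^ p * polyDedekindSum k p 1 m =
      ∑ l ∈ range (p + 2), ∑ i ∈ range (p + 2 - l),
        ((p : ℝ) + 1) * (p.choose l : ℝ) * ((p + 2 - l).choose i : ℝ) / ((p + 2 - l : ℕ) : ℝ) *
          (bernoulli i * polyBernoulli k l * (m : ℝ) ^ (p + 1 - i)) := by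
  simp only [polyDedekindSum_one_eq_sum_range hm, mul_polyBernoulliPoly]
  rw [sum_comm, mul_sum, sum_range_succ _ (p + 1), Nat.choose_eq_zero_of_lt (Nat.lt_succ_self p)]
  simp only [Nat.cast_zero, mul_zero, zero_mul, zero_div, sum_const_zero, add_zero]
  refine sum_congr rfl fun l hl => ?_
  have hl : p + 1 - l + 1 = p + 2 - l := by have := mem_range.mp hl; omega
  have hl' : ((p + 1 - l : ℕ) : ℝ) + 1 = ((p + 2 - l : ℕ) : ℝ) := by exact_mod_cast hl
  rw [← mul_sum, mul_mul_mul_comm,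
    pow_mul_sum_range_div_pow hm.ne' (by omega), hl, hl', mul_sum]
  exact sum_congr rfl fun i _ => by ring

theorem polyDedekind_one'_general (m p : ℕ) (k : ℤ) (hm : 0 < m) :
    ((p : ℝ) + 1) * (m : ℝ) ^ p * polyDedekindSum k p 1 m =
      (∑ i ∈ Finset.range (p + 2),
          ((p + 1).choose i : ℝ) * (bernoulli i : ℝ) * (m : ℝ) ^ (p + 1 - i) *
            polyBernoulliPoly k (p + 1 - i) 1) +
        1 / ((p : ℝ) + 2) * ∑ i ∈ Finset.range (p + 2),
          ((p + 2).choose i : ℝ) * ((i : ℝ) - 1) * (bernoulli i : ℝ) * (m : ℝ) ^ (p + 1 - i) *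
            (polyBernoulliPoly k (p + 2 - i) 1 - (polyBernoulli k (p + 2 - i) : ℝ)) := by
  rw [add_one_mul_pow_mul_polyDedekindSum_one hm, sum_range_sum_range_sub_comm, mul_sum,
    ← sum_add_distrib]
  refine sum_congr rfl fun i hi => ?_
  have hi : p + 1 - i + 1 = p + 2 - i := by have := mem_range.mp hi; omega
  rw [polyBernoulliPoly_one, polyBernoulliPoly_one_sub_polyBernoulli, hi, mul_sum, mul_sum,
    mul_sum, ← sum_add_distrib]
  refine sum_congr rfl fun l hl => ?_
  rw [succ_mul_choose_mul_choose_div_eq (by have := mem_range.mp hl; omega)]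
  ring

/-- Formula for `(p+1) m^p S_p^{(k)}(1,m)` for odd `p ≥ 3`. -/
theorem polyDedekind_one' (m p : ℕ) (k : ℤ) (hm : 0 < m) (hodd : Odd p) (hp : 3 ≤ p) :
    ((p : ℝ) + 1) * (m : ℝ) ^ p * polyDedekindSum k p 1 m =
      (∑ i ∈ Finset.range (p + 2),
          ((p + 1).choose i : ℝ) * (bernoulli i : ℝ) * (m : ℝ) ^ (p + 1 - i) *
            polyBernoulliPoly k (p + 1 - i) 1) +
        1 / ((p : ℝ) + 2) * ∑ i ∈ Finset.range (p + 2),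
          ((p + 2).choose i : ℝ) * ((i : ℝ) - 1) * (bernoulli i : ℝ) * (m : ℝ) ^ (p + 1 - i) *
            (polyBernoulliPoly k (p + 2 - i) 1 - (polyBernoulli k (p + 2 - i) : ℝ)) :=
  polyDedekind_one'_general m p k hm
end

section
/- Reciprocity for poly-Dedekind sums: for relatively prime positive integers h, m, positive integer p, and integer k, h m^p S_p^{(k)}(h,m) + m h^p S_p^{(k)}(m,h) = \sum_{\mu=0}^{m-1} \sum_{j=0}^{p} \sum_{\nu=0}^{h-1} \sum_{l=1}^{p-j+1} ((mh)^{j-1} \binom{p}{j} S_1(p-j+1,l) / ((p-j+1) l^{k-1})) \cdot (\mu h m^{p-j} + m \nu h^{p-j}) \overline{B}_j(\nu/h + \mu/m). -/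
/-!
Since `Ei_k(log(1+t)) / (e^t - 1) = (Ei_k(log(1+t)) / t) * (t / (e^t - 1))`, the type 2
poly-Bernoulli polynomial `B_p^{(k)}(x)` is the binomial convolution of the Bernoulli
polynomials `B_j(x)` with the coefficients of `Ei_k(log(1+t)) / t = ∑ c_r t^r / r!`. Hence
`S_p^{(k)}(h,m)` is the same combination of Apostol's generalized Dedekind sums `S_j(h,m)`, and
for each `j` Raabe's multiplication formula `h^j ∑_{ν<h} B̄_j(x + ν/h) = h B̄_j(hx)` collapses
the sums over `ν` (resp. `μ`) in the right-hand side to `h m^p S_j(h,m)` (resp. `m h^p S_j(m,h)`).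
-/

open Finset PowerSeries Nat

def binomConv {R : Type*} [CommSemiring R] (a b : ℕ → R) (n : ℕ) : R :=
  ∑ l ∈ range (n + 1), (n.choose l : R) * a l * b (n - l)

def egf {K : Type*} [DivisionSemiring K] (a : ℕ → K) : PowerSeries K := mk fun n => a n / n !

section Egf

variable {K : Type*} [Field K] [CharZero K]

theorem egf_injective : Function.Injective (egf (K := K)) := by
  intro a b hab
  funext n
  have := congrArg (coeff n) hab
  have hn : (n ! : K) ≠ 0 := Nat.cast_ne_zero.mpr (factorial_ne_zero n)
  simpa [egf, div_left_inj' hn] using this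

theorem egf_binomConv (a b : ℕ → K) : egf (binomConv a b) = egf a * egf b := by
  ext n
  rw [coeff_mul, Nat.sum_antidiagonal_eq_sum_range_succ_mk]
  simp only [egf, coeff_mk, binomConv, sum_div]
  refine sum_congr rfl fun l hl => ?_
  rw [Nat.cast_choose K (mem_range_succ_iff.mp hl)]
  have hn := factorial_ne_zero n
  have hl := factorial_ne_zero l
  have hnl := factorial_ne_zero (n - l)
  field_simp

theorem binomConv_right_comm (a b c : ℕ → K) :
    binomConv (binomConv a b) c = binomConv (binomConv a c) b :=
  egf_injective <| by simp only [egf_binomConv, mul_right_comm]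

end Egf

/-- The coefficient `c_r = r! [t^r] (Ei_k(log(1+t)) / t)`. -/
def polyExpDivCoeff (k : ℤ) (r : ℕ) : ℚ := polyExpCoeff k (r + 1) / (r + 1)

theorem sum_range_choose_mul_polyBernoulli (k : ℤ) (n : ℕ) :
    ∑ l ∈ range n, (n.choose l : ℚ) * polyBernoulli k l = polyExpCoeff k n := by
  cases n with
  | zero => simp [polyExpCoeff]
  | succ n =>
    rw [sum_range_succ, Nat.choose_succ_self_right, polyBernoulli,
      sum_attach (range n) fun l => ((n + 1).choose l : ℚ) * polyBernoulli k l]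
    push_cast
    field_simp
    ring

theorem egf_polyBernoulli_mul_exp_sub_one (k : ℤ) :
    egf (polyBernoulli k) * (exp ℚ - 1) = egf (polyExpCoeff k) := by
  have hexp : exp ℚ = egf fun _ => 1 := by
    ext n
    simp [egf, coeff_exp]
  rw [mul_sub, mul_one, hexp, ← egf_binomConv]
  ext n
  simp only [egf, map_sub, coeff_mk, binomConv, mul_one, ← sub_div,
    sum_range_succ, Nat.choose_self, Nat.cast_one, one_mul, add_sub_cancel_right]
  rw [← sum_range_choose_mul_polyBernoulli]

theorem egf_polyExpCoeff (k : ℤ) : egf (polyExpCoeff k) = X * egf (polyExpDivCoeff k) := by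
  ext n
  cases n with
  | zero => simp [egf, polyExpCoeff]
  | succ n =>
    rw [coeff_succ_X_mul]
    simp only [egf, coeff_mk, polyExpDivCoeff, factorial_succ]
    push_cast
    rw [div_div, mul_comm]

theorem egf_bernoulli : egf bernoulli = bernoulliPowerSeries ℚ := by
  ext n
  simp [egf, bernoulliPowerSeries]

theorem polyBernoulli_eq_binomConv (k : ℤ) :
    polyBernoulli k = binomConv bernoulli (polyExpDivCoeff k) := by
  have hexp : (exp ℚ - 1 : PowerSeries ℚ) ≠ 0 := fun h => by
    simpa [coeff_exp] using congrArg (coeff 1) h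
  refine egf_injective (mul_right_cancel₀ hexp ?_)
  rw [egf_polyBernoulli_mul_exp_sub_one, egf_polyExpCoeff, egf_binomConv, egf_bernoulli,
    mul_right_comm, bernoulliPowerSeries_mul_exp_sub_one]

theorem polyBernoulliPoly_eq_sum (k : ℤ) (n : ℕ) (x : ℝ) :
    polyBernoulliPoly k n x =
      ∑ j ∈ range (n + 1), (n.choose j : ℝ) * bernoulliPolyFun j x * polyExpDivCoeff k (n - j) := by
  have hcast : (fun l => (polyBernoulli k l : ℝ)) =
      binomConv (fun l => (bernoulli l : ℝ)) fun r => (polyExpDivCoeff k r : ℝ) := by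
    funext l
    simp [polyBernoulli_eq_binomConv, binomConv]
  calc polyBernoulliPoly k n x = binomConv (fun l => (polyBernoulli k l : ℝ)) (x ^ ·) n := rfl
    _ = binomConv (binomConv (fun l => (bernoulli l : ℝ)) (x ^ ·))
          (fun r => (polyExpDivCoeff k r : ℝ)) n := by rw [hcast, binomConv_right_comm]
    _ = _ := rfl

theorem polyDedekindSum_eq_sum_genDedekindSum (k : ℤ) (p h m : ℕ) :
    polyDedekindSum k p h m =
      ∑ j ∈ range (p + 1), (p.choose j : ℝ) * polyExpDivCoeff k (p - j) * genDedekindSum j h m := by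
  simp only [polyDedekindSum, polyBernoulliBar, polyBernoulliPoly_eq_sum, genDedekindSum,
    bernoulliBar, mul_sum]
  rw [sum_comm]
  exact sum_congr rfl fun j _ => sum_congr rfl fun μ _ => by ring

theorem bernoulliPolyFun_eq_bernoulliFun : bernoulliPolyFun = bernoulliFun := by
  funext n x
  rw [bernoulliFun, Polynomial.bernoulli, Polynomial.map_sum, Polynomial.eval_finsetSum,
    bernoulliPolyFun]
  refine sum_congr rfl fun i _ => ?_
  rw [Polynomial.map_monomial, Polynomial.eval_monomial, eq_ratCast]
  push_cast
  ring

theorem bernoulliBar_add_one (j : ℕ) (x : ℝ) : bernoulliBar j (x + 1) = bernoulliBar j x := by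
  simp only [bernoulliBar, Int.fract_add_one]

theorem bernoulliBar_mul {b : ℕ} (hb : b ≠ 0) (j : ℕ) (x : ℝ) :
    (b : ℝ) ^ j * ∑ ν ∈ range b, bernoulliBar j (x + ν / b) = b * bernoulliBar j (b * x) := by
  have hb' : (b : ℝ) ≠ 0 := Nat.cast_ne_zero.mpr hb
  set D : ℝ → ℝ := fun x =>
    (b : ℝ) ^ j * ∑ ν ∈ range b, bernoulliBar j (x + ν / b) - b * bernoulliBar j (b * x)
  -- `D` has period `1/b` and vanishes on `[0, 1/b)` by `bernoulliFun_mul`.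
  have hper : Function.Periodic D (b : ℝ)⁻¹ := by
    intro x
    have hshift : ∑ ν ∈ range b, bernoulliBar j (x + ν / b + (b : ℝ)⁻¹) =
        ∑ ν ∈ range b, bernoulliBar j (x + ν / b) := by
      have h1 := sum_range_succ' (fun ν : ℕ => bernoulliBar j (x + ν / b)) b
      rw [sum_range_succ, div_self hb', bernoulliBar_add_one, Nat.cast_zero, zero_div,
        add_zero] at h1
      simp only [Nat.cast_add, Nat.cast_one, add_div, ← add_assoc, one_div] at h1
      linarith
    simp only [D, add_right_comm x (b : ℝ)⁻¹, hshift, mul_add, mul_inv_cancel₀ hb',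
      bernoulliBar_add_one]
  have hfund : ∀ y : ℝ, 0 ≤ y → b * y < 1 → D y = 0 := by
    intro y hy0 hy1
    have hfract : ∀ ν ∈ range b, Int.fract (y + ν / b) = y + ν / b := by
      intro ν hν
      have hνb : (ν : ℝ) + 1 ≤ b := by exact_mod_cast mem_range.mp hν
      refine Int.fract_eq_self.mpr ⟨by positivity, ?_⟩
      rw [← mul_lt_mul_iff_of_pos_left (show (0 : ℝ) < b by positivity), mul_add,
        mul_div_cancel₀ _ hb', mul_one]
      linarith
    simp only [D, bernoulliBar]
    rw [sum_congr rfl fun ν hν => by rw [hfract ν hν], Int.fract_eq_self.mpr ⟨by positivity, hy1⟩,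
      bernoulliPolyFun_eq_bernoulliFun, bernoulliFun_mul j hb]
    field_simp
    ring
  have hx : 0 ≤ (b : ℝ) * (x - ⌊(b : ℝ) * x⌋ * (b : ℝ)⁻¹) ∧
      (b : ℝ) * (x - ⌊(b : ℝ) * x⌋ * (b : ℝ)⁻¹) < 1 := by
    rw [mul_sub, mul_left_comm, mul_inv_cancel₀ hb', mul_one, ← Int.fract]
    exact ⟨Int.fract_nonneg _, Int.fract_lt_one _⟩
  rw [← sub_eq_zero]
  change D x = 0
  rw [← hper.sub_int_mul_eq ⌊(b : ℝ) * x⌋]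
  exact hfund _ (nonneg_of_mul_nonneg_right hx.1 (by positivity)) hx.2

theorem genDedekindSum_eq_sum_range (j h m : ℕ) :
    genDedekindSum j h m = ∑ μ ∈ range m, (μ / m : ℝ) * bernoulliBar j (h * μ / m) := by
  rw [genDedekindSum, range_eq_Ico]
  refine sum_subset (Ico_subset_Ico_left zero_le_one) fun μ hμ hμ' => ?_
  obtain rfl : μ = 0 := by simp only [mem_Ico] at hμ hμ'; omega
  simp

theorem sum_sum_zpow_mul_bernoulliBar {a b : ℕ} (ha : a ≠ 0) (hb : b ≠ 0) {j p : ℕ} (hj : j ≤ p) :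
    ∑ μ ∈ range a, ∑ ν ∈ range b,
        ((a : ℝ) * b) ^ ((j : ℤ) - 1) * (μ * b * (a : ℝ) ^ (p - j)) *
          bernoulliBar j (μ / a + ν / b) =
      b * (a : ℝ) ^ p * genDedekindSum j b a := by
  have ha' : (a : ℝ) ≠ 0 := Nat.cast_ne_zero.mpr ha
  rw [genDedekindSum_eq_sum_range, mul_sum]
  refine sum_congr rfl fun μ _ => ?_
  rw [← mul_sum, zpow_sub_one₀ (mul_ne_zero ha' (Nat.cast_ne_zero.mpr hb)), zpow_natCast]
  calc ((a : ℝ) * b) ^ j * ((a : ℝ) * b)⁻¹ * (μ * b * (a : ℝ) ^ (p - j)) *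
        ∑ ν ∈ range b, bernoulliBar j (μ / a + ν / b)
      = (a : ℝ) ^ j * (a : ℝ) ^ (p - j) * μ / a *
          ((b : ℝ) ^ j * ∑ ν ∈ range b, bernoulliBar j (μ / a + ν / b)) := by
        field_simp
        ring
    _ = b * (a : ℝ) ^ p * (μ / a * bernoulliBar j (b * μ / a)) := by
        rw [bernoulliBar_mul hb, pow_mul_pow_sub _ hj, mul_div_assoc (b : ℝ)]
        ring

theorem genDedekindSum_reciprocity {h m : ℕ} (hh : h ≠ 0) (hm : m ≠ 0) {j p : ℕ} (hj : j ≤ p) :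
    h * (m : ℝ) ^ p * genDedekindSum j h m + m * (h : ℝ) ^ p * genDedekindSum j m h =
      ∑ μ ∈ range m, ∑ ν ∈ range h, ((m : ℝ) * h) ^ ((j : ℤ) - 1) *
        (μ * h * (m : ℝ) ^ (p - j) + m * ν * (h : ℝ) ^ (p - j)) *
          bernoulliBar j (ν / h + μ / m) := by
  rw [← sum_sum_zpow_mul_bernoulliBar hm hh hj, ← sum_sum_zpow_mul_bernoulliBar hh hm hj,
    sum_comm (s := range h), ← sum_add_distrib]
  refine sum_congr rfl fun μ _ => ?_
  rw [← sum_add_distrib]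
  refine sum_congr rfl fun ν _ => ?_
  rw [add_comm (ν / h : ℝ), mul_comm (h : ℝ) m]
  ring

theorem polyExpDivCoeff_eq_sum (k : ℤ) (r : ℕ) :
    (polyExpDivCoeff k r : ℝ) =
      ∑ l ∈ Icc 1 (r + 1), (stirling1 (r + 1) l : ℝ) / ((r + 1) * (l : ℝ) ^ (k - 1)) := by
  simp only [polyExpDivCoeff, polyExpCoeff, sum_div, div_div, mul_comm]
  push_cast
  rfl

theorem polyDedekind_reciprocity_general (h m p : ℕ) (hh : 0 < h) (hm : 0 < m) (k : ℤ) :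
    (h : ℝ) * (m : ℝ) ^ p * polyDedekindSum k p h m +
        (m : ℝ) * (h : ℝ) ^ p * polyDedekindSum k p m h =
      ∑ μ ∈ Finset.range m, ∑ j ∈ Finset.range (p + 1), ∑ ν ∈ Finset.range h,
        ∑ l ∈ Finset.Icc 1 (p - j + 1),
          ((m : ℝ) * h) ^ ((j : ℤ) - 1) * (p.choose j : ℝ) * (stirling1 (p - j + 1) l : ℝ) /
              (((p - j : ℕ) + 1) * (l : ℝ) ^ (k - 1)) *
            ((μ : ℝ) * h * (m : ℝ) ^ (p - j) + (m : ℝ) * ν * (h : ℝ) ^ (p - j)) *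
            bernoulliBar j ((ν : ℝ) / h + (μ : ℝ) / m) := by
  calc _ = ∑ j ∈ range (p + 1), (p.choose j : ℝ) * polyExpDivCoeff k (p - j) *
          (h * (m : ℝ) ^ p * genDedekindSum j h m + m * (h : ℝ) ^ p * genDedekindSum j m h) := by
        simp only [polyDedekindSum_eq_sum_genDedekindSum, mul_sum, ← sum_add_distrib]
        exact sum_congr rfl fun j _ => by ring
    _ = _ := by
        rw [sum_comm]
        refine sum_congr rfl fun j hj => ?_
        rw [genDedekindSum_reciprocity hh.ne' hm.ne' (mem_range_succ_iff.mp hj), mul_sum]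
        refine sum_congr rfl fun μ _ => ?_
        rw [mul_sum]
        refine sum_congr rfl fun ν _ => ?_
        rw [polyExpDivCoeff_eq_sum, mul_sum, sum_mul]
        exact sum_congr rfl fun l _ => by ring

/-- Reciprocity for poly-Dedekind sums. -/
theorem polyDedekind_reciprocity (h m p : ℕ) (hh : 0 < h) (hm : 0 < m)
    (hcop : Nat.Coprime h m) (hp : 0 < p) (k : ℤ) :
    (h : ℝ) * (m : ℝ) ^ p * polyDedekindSum k p h m +
        (m : ℝ) * (h : ℝ) ^ p * polyDedekindSum k p m h =
      ∑ μ ∈ Finset.range m, ∑ j ∈ Finset.range (p + 1), ∑ ν ∈ Finset.range h,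
        ∑ l ∈ Finset.Icc 1 (p - j + 1),
          ((m : ℝ) * h) ^ ((j : ℤ) - 1) * (p.choose j : ℝ) * (stirling1 (p - j + 1) l : ℝ) /
              (((p - j : ℕ) + 1) * (l : ℝ) ^ (k - 1)) *
            ((μ : ℝ) * h * (m : ℝ) ^ (p - j) + (m : ℝ) * ν * (h : ℝ) ^ (p - j)) *
            bernoulliBar j ((ν : ℝ) / h + (μ : ℝ) / m) :=
  polyDedekind_reciprocity_general h m p hh hm k
end
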